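/- arXiv:math/9806056 — 6 statements merged into one kernel-verified Lean document; each statement's English description precedes it below -/
import Mathlib

section
/- Let M₁, M₂ ∈ SL(2,ℂ) with tr M₁ = tr M₂ = 2. (i) If tr(M₁M₂) ≠ 2, then there exist x₁ ∈ ℂ with x₁² = 2 − tr(M₁M₂) and an invertible matrix P ∈ GL(2,ℂ) such that P⁻¹M₁P = [[1,−x₁],[0,1]] and P⁻¹M₂P = [[1,0],[x₁,1]]. (ii) If tr(M₁M₂) = 2, then M₁ and M₂ have a common eigenvector; equivalently, there exists an invertible P ∈ GL(2,ℂ) such that P⁻¹M₁P and P⁻¹M₂P are both upper triangular. -/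
open Matrix

namespace PairUnipAux

/-- A nonzero vector in `Fin 2 → ℂ` has a nonzero component. -/
lemma comp_ne (v : Fin 2 → ℂ) (hv : v ≠ 0) : v 0 ≠ 0 ∨ v 1 ≠ 0 := by
  by_contra h
  push_neg at h
  exact hv (by funext i; fin_cases i <;> simp [h.1, h.2])

/-- Cayley–Hamilton for a singular `2 × 2` matrix. -/
lemma sq_eq_trace_smul (A : Matrix (Fin 2) (Fin 2) ℂ) (hdet : A.det = 0) :
    A * A = A.trace • A := by
  have h : !![A 0 0, A 0 1; A 1 0, A 1 1] * !![A 0 0, A 0 1; A 1 0, A 1 1]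
      = (A 0 0 + A 1 1) • !![A 0 0, A 0 1; A 1 0, A 1 1] := by
    rw [Matrix.det_fin_two] at hdet
    ext i j; fin_cases i <;> fin_cases j <;>
      simp [Matrix.mul_apply, Fin.sum_univ_two] <;>
      (first | linear_combination -hdet | ring)
  rw [Matrix.trace_fin_two]
  rw [← Matrix.eta_fin_two A] at h
  exact h

/-- A trace-zero singular `2 × 2` matrix squares to zero. -/
lemma sq_eq_zero (A : Matrix (Fin 2) (Fin 2) ℂ) (htr : A.trace = 0) (hdet : A.det = 0) :
    A * A = 0 := by
  rw [sq_eq_trace_smul A hdet, htr, zero_smul]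

/-- Two vectors killed by a nonzero `2 × 2` matrix are proportional. -/
lemma ker_parallel (N : Matrix (Fin 2) (Fin 2) ℂ) (hN : N ≠ 0) (z u : Fin 2 → ℂ)
    (hz : N.mulVec z = 0) (hu : N.mulVec u = 0) : z 0 * u 1 = z 1 * u 0 := by
  have hz0 : N 0 0 * z 0 + N 0 1 * z 1 = 0 := by
    simpa [Matrix.mulVec, dotProduct, Fin.sum_univ_two] using congrFun hz 0
  have hz1 : N 1 0 * z 0 + N 1 1 * z 1 = 0 := by
    simpa [Matrix.mulVec, dotProduct, Fin.sum_univ_two] using congrFun hz 1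
  have hu0 : N 0 0 * u 0 + N 0 1 * u 1 = 0 := by
    simpa [Matrix.mulVec, dotProduct, Fin.sum_univ_two] using congrFun hu 0
  have hu1 : N 1 0 * u 0 + N 1 1 * u 1 = 0 := by
    simpa [Matrix.mulVec, dotProduct, Fin.sum_univ_two] using congrFun hu 1
  have hex : N 0 0 ≠ 0 ∨ N 0 1 ≠ 0 ∨ N 1 0 ≠ 0 ∨ N 1 1 ≠ 0 := by
    by_contra h
    push_neg at h
    exact hN (by ext i j; fin_cases i <;> fin_cases j <;>
      simp [h.1, h.2.1, h.2.2.1, h.2.2.2])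
  rcases hex with h | h | h | h
  · apply mul_left_cancel₀ h; linear_combination u 1 * hz0 - z 1 * hu0
  · apply mul_left_cancel₀ h; linear_combination z 0 * hu0 - u 0 * hz0
  · apply mul_left_cancel₀ h; linear_combination u 1 * hz1 - z 1 * hu1
  · apply mul_left_cancel₀ h; linear_combination z 0 * hu1 - u 0 * hz1

/-- Cross product zero means proportional (over a field, with one vector nonzero). -/
lemma exists_smul_of_cross (z w : Fin 2 → ℂ) (hw : w ≠ 0)
    (hc : z 0 * w 1 = z 1 * w 0) : ∃ γ : ℂ, z = γ • w := by
  rcases comp_ne w hw with h | h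
  · refine ⟨z 0 / w 0, ?_⟩
    funext i; fin_cases i <;> simp [Pi.smul_apply, smul_eq_mul] <;> field_simp <;>
      linear_combination -hc
  · refine ⟨z 1 / w 1, ?_⟩
    funext i; fin_cases i <;> simp [Pi.smul_apply, smul_eq_mul] <;> field_simp <;>
      linear_combination hc

/-- Every trace-zero singular `2 × 2` matrix has a nonzero kernel vector. -/
lemma ker_exists (N : Matrix (Fin 2) (Fin 2) ℂ) (htr : N.trace = 0) (hdet : N.det = 0) :
    ∃ v : Fin 2 → ℂ, v ≠ 0 ∧ N.mulVec v = 0 := by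
  rw [Matrix.trace_fin_two] at htr
  rw [Matrix.det_fin_two] at hdet
  by_cases hb : N 0 1 = 0
  · have ha : N 0 0 = 0 := by
      have h2 : N 0 0 ^ 2 = 0 := by linear_combination N 0 0 * htr - hdet - N 1 0 * hb
      exact pow_eq_zero_iff (by norm_num) |>.mp h2
    refine ⟨![0, 1], by simp [funext_iff, Fin.forall_fin_two], ?_⟩
    funext i; fin_cases i <;>
      simp [Matrix.mulVec, dotProduct, Fin.sum_univ_two, hb] <;>
      linear_combination htr - ha
  · refine ⟨![N 0 1, -(N 0 0)], ?_, ?_⟩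
    · intro h
      exact hb (by simpa using congrFun h 0)
    · funext i; fin_cases i <;>
        simp [Matrix.mulVec, dotProduct, Fin.sum_univ_two] <;>
        (first | linear_combination -hdet | linear_combination (0:ℂ) * hdet)
  
/-- Determinant of `M - 1` for a `2 × 2` matrix. -/
lemma det_sub_one (M : Matrix (Fin 2) (Fin 2) ℂ) : (M - 1).det = M.det - M.trace + 1 := by
  rw [Matrix.det_fin_two, Matrix.det_fin_two, Matrix.trace_fin_two]
  simp [Matrix.sub_apply, Matrix.one_apply]
  ring

/-- Conjugation identity. -/
lemma conj_eq {P M A : Matrix (Fin 2) (Fin 2) ℂ} (hP : IsUnit P.det) (h : M * P = P * A) :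
    P⁻¹ * M * P = A := by
  rw [Matrix.mul_assoc, h, ← Matrix.mul_assoc, Matrix.nonsing_inv_mul _ hP, one_mul]

/-- If the first column of `P` is fixed by `M`, then `P⁻¹ M P` is lower-left zero. -/
lemma lower_left_zero {P M : Matrix (Fin 2) (Fin 2) ℂ} (hP : IsUnit P.det)
    (h : ∀ k, (M * P) k 0 = P k 0) : (P⁻¹ * M * P) 1 0 = 0 := by
  have : (P⁻¹ * M * P) 1 0 = (P⁻¹ * P) 1 0 := by
    rw [Matrix.mul_assoc, Matrix.mul_apply, Matrix.mul_apply]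
    exact Finset.sum_congr rfl fun k _ => by rw [h k]
  rw [this, Matrix.nonsing_inv_mul _ hP]
  simp [Matrix.one_apply]

end PairUnipAux
open PairUnipAux in
/-- Canonical form of a pair of unipotent matrices in `SL(2, ℂ)`:
(i) if `tr (M₁ M₂) ≠ 2` they can be simultaneously conjugated to the standard
lower/upper triangular unipotent pair; (ii) if `tr (M₁ M₂) = 2` they have a common
eigenvector, equivalently they can be simultaneously conjugated to upper triangular form. -/
theorem pair_unipotent_canonical_form (M₁ M₂ : Matrix (Fin 2) (Fin 2) ℂ)
    (hdet1 : M₁.det = 1) (hdet2 : M₂.det = 1)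
    (htr1 : M₁.trace = 2) (htr2 : M₂.trace = 2) :
    ((M₁ * M₂).trace ≠ 2 →
      ∃ (x₁ : ℂ) (P : Matrix (Fin 2) (Fin 2) ℂ),
        x₁ ^ 2 = 2 - (M₁ * M₂).trace ∧ IsUnit P ∧
        P⁻¹ * M₁ * P = !![1, -x₁; 0, 1] ∧
        P⁻¹ * M₂ * P = !![1, 0; x₁, 1]) ∧
    ((M₁ * M₂).trace = 2 →
      (∃ v : Fin 2 → ℂ, v ≠ 0 ∧ ∃ a b : ℂ,
          M₁.mulVec v = a • v ∧ M₂.mulVec v = b • v) ∧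
      ∃ P : Matrix (Fin 2) (Fin 2) ℂ, IsUnit P ∧
        (P⁻¹ * M₁ * P) 1 0 = 0 ∧ (P⁻¹ * M₂ * P) 1 0 = 0) := by
  set N₁ : Matrix (Fin 2) (Fin 2) ℂ := M₁ - 1 with hN₁def
  set N₂ : Matrix (Fin 2) (Fin 2) ℂ := M₂ - 1 with hN₂def
  have hM1 : M₁ = N₁ + 1 := by rw [hN₁def, sub_add_cancel]
  have hM2 : M₂ = N₂ + 1 := by rw [hN₂def, sub_add_cancel]
  have htrN₁ : N₁.trace = 0 := by
    rw [hN₁def, Matrix.trace_sub, Matrix.trace_one, htr1]; norm_num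
  have htrN₂ : N₂.trace = 0 := by
    rw [hN₂def, Matrix.trace_sub, Matrix.trace_one, htr2]; norm_num
  have hdetN₁ : N₁.det = 0 := by
    rw [hN₁def, det_sub_one, hdet1, htr1]; ring
  have hdetN₂ : N₂.det = 0 := by
    rw [hN₂def, det_sub_one, hdet2, htr2]; ring
  have h1sq : N₁ * N₁ = 0 := sq_eq_zero N₁ htrN₁ hdetN₁
  have h2sq : N₂ * N₂ = 0 := sq_eq_zero N₂ htrN₂ hdetN₂
  set C : Matrix (Fin 2) (Fin 2) ℂ := N₁ * N₂ with hCdef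
  have hCsplit : C = M₁ * M₂ - M₁ - M₂ + 1 := by
    rw [hCdef, hN₁def, hN₂def]
    noncomm_ring
  have htrC : C.trace = (M₁ * M₂).trace - 2 := by
    rw [hCsplit, Matrix.trace_add, Matrix.trace_sub, Matrix.trace_sub, Matrix.trace_one,
      htr1, htr2]
    norm_num
  have hdetC : C.det = 0 := by rw [hCdef, Matrix.det_mul, hdetN₁, zero_mul]
  have hN1C : N₁ * C = 0 := by rw [hCdef, ← Matrix.mul_assoc, h1sq, Matrix.zero_mul]
  constructor
  · -- case (i)
    intro hne
    obtain ⟨x, hx⟩ : ∃ x : ℂ, x ^ 2 = 2 - (M₁ * M₂).trace :=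
      IsAlgClosed.exists_pow_nat_eq _ zero_lt_two
    have hxne : x ≠ 0 := by
      intro h
      rw [h] at hx
      apply hne
      linear_combination hx
    have htrC' : C.trace = -x ^ 2 := by rw [htrC]; linear_combination hx
    have hCC : C * C = (-x ^ 2) • C := by
      rw [sq_eq_trace_smul C hdetC, htrC']
    -- pick a nonzero diagonal entry of C
    have hjex : ∃ j : Fin 2, C j j ≠ 0 := by
      by_contra h
      push_neg at h
      have h0 := h 0
      have h1 := h 1
      have : C.trace = 0 := by rw [Matrix.trace_fin_two, h0, h1, add_zero]
      rw [htrC'] at this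
      exact hxne (by
        have : x ^ 2 = 0 := by linear_combination -this
        exact pow_eq_zero_iff (by norm_num) |>.mp this)
    obtain ⟨j, hj⟩ := hjex
    set p : Fin 2 → ℂ := fun i => C i j with hpdef
    have hp : p ≠ 0 := fun h => hj (by simpa [hpdef] using congrFun h j)
    have hN1p : N₁.mulVec p = 0 := by
      funext i
      have h := congrFun (congrFun hN1C i) j
      simp only [Matrix.mul_apply, Fin.sum_univ_two, Matrix.zero_apply] at h
      simpa [Matrix.mulVec, dotProduct, Fin.sum_univ_two, hpdef] using h
    have hCp : C.mulVec p = (-x ^ 2) • p := by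
      funext i
      have h := congrFun (congrFun hCC i) j
      simp only [Matrix.mul_apply, Fin.sum_univ_two, Matrix.smul_apply, smul_eq_mul] at h
      simpa [Matrix.mulVec, dotProduct, Fin.sum_univ_two, hpdef] using h
    set q : Fin 2 → ℂ := N₂.mulVec p with hqdef
    have hN1q : N₁.mulVec q = (-x ^ 2) • p := by
      rw [hqdef, Matrix.mulVec_mulVec, ← hCdef, hCp]
    have hN2q : N₂.mulVec q = 0 := by
      rw [hqdef, Matrix.mulVec_mulVec, h2sq, Matrix.zero_mulVec]
    have hq : q ≠ 0 := by
      intro h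
      have h2 : (-x ^ 2) • p = 0 := by rw [← hN1q, h, Matrix.mulVec_zero]
      rcases smul_eq_zero.mp h2 with h3 | h3
      · exact hxne (by simpa [pow_eq_zero_iff] using neg_eq_zero.mp (by simpa using h3))
      · exact hp h3
    have hind : p 0 * q 1 - p 1 * q 0 ≠ 0 := by
      intro h
      obtain ⟨γ, hγ⟩ := exists_smul_of_cross q p hp (by linear_combination -h)
      have h2 : N₁.mulVec q = 0 := by rw [hγ, Matrix.mulVec_smul, hN1p, smul_zero]
      rw [hN1q] at h2
      rcases smul_eq_zero.mp h2 with h3 | h3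
      · exact hxne (by simpa [pow_eq_zero_iff] using neg_eq_zero.mp (by simpa using h3))
      · exact hp h3
    set P : Matrix (Fin 2) (Fin 2) ℂ := !![x * p 0, q 0; x * p 1, q 1] with hPdef
    have hdetP : P.det = x * (p 0 * q 1 - p 1 * q 0) := by
      rw [hPdef, Matrix.det_fin_two_of]; ring
    have hdetPne : IsUnit P.det := by
      rw [hdetP]
      exact (mul_ne_zero hxne hind).isUnit
    -- the vector identities
    have hM1p : M₁.mulVec p = p := by
      rw [hM1, Matrix.add_mulVec, Matrix.one_mulVec, hN1p, zero_add]
    have hM1q : M₁.mulVec q = q + (-x ^ 2) • p := by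
      rw [hM1, Matrix.add_mulVec, Matrix.one_mulVec, hN1q, add_comm]
    have hM2p : M₂.mulVec p = p + q := by
      rw [hM2, Matrix.add_mulVec, Matrix.one_mulVec, ← hqdef, add_comm]
    have hM2q : M₂.mulVec q = q := by
      rw [hM2, Matrix.add_mulVec, Matrix.one_mulVec, hN2q, zero_add]
    -- scalar versions
    have e1 : ∀ i, M₁ i 0 * p 0 + M₁ i 1 * p 1 = p i := fun i => by
      simpa [Matrix.mulVec, dotProduct, Fin.sum_univ_two] using congrFun hM1p i
    have e2 : ∀ i, M₁ i 0 * q 0 + M₁ i 1 * q 1 = q i - x ^ 2 * p i := fun i => by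
      have := congrFun hM1q i
      simp only [Pi.add_apply, Pi.smul_apply, smul_eq_mul] at this
      simp only [Matrix.mulVec, dotProduct, Fin.sum_univ_two] at this
      linear_combination this
    have e3 : ∀ i, M₂ i 0 * p 0 + M₂ i 1 * p 1 = p i + q i := fun i => by
      simpa [Matrix.mulVec, dotProduct, Fin.sum_univ_two] using congrFun hM2p i
    have e4 : ∀ i, M₂ i 0 * q 0 + M₂ i 1 * q 1 = q i := fun i => by
      simpa [Matrix.mulVec, dotProduct, Fin.sum_univ_two] using congrFun hM2q i
    refine ⟨x, P, hx, (Matrix.isUnit_iff_isUnit_det P).mpr hdetPne, ?_, ?_⟩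
    · apply conj_eq hdetPne
      ext i j'
      fin_cases i <;> fin_cases j' <;>
        simp [hPdef, Matrix.mul_apply, Fin.sum_univ_two] <;>
        (first
          | linear_combination x * e1 0
          | linear_combination e2 0
          | linear_combination x * e1 1
          | linear_combination e2 1)
    · apply conj_eq hdetPne
      ext i j'
      fin_cases i <;> fin_cases j' <;>
        simp [hPdef, Matrix.mul_apply, Fin.sum_univ_two] <;>
        (first
          | linear_combination x * e3 0
          | linear_combination e4 0
          | linear_combination x * e3 1
          | linear_combination e4 1)
  · -- case (ii)
    intro heq
    have htrC0 : C.trace = 0 := by rw [htrC, heq]; ring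
    obtain ⟨u, hu, hN1u⟩ := ker_exists N₁ htrN₁ hdetN₁
    obtain ⟨w, hw, hN2w⟩ := ker_exists N₂ htrN₂ hdetN₂
    -- find a common kernel vector v
    have hcommon : ∃ v : Fin 2 → ℂ, v ≠ 0 ∧ N₁.mulVec v = 0 ∧ N₂.mulVec v = 0 := by
      by_cases h2u : N₂.mulVec u = 0
      · exact ⟨u, hu, hN1u, h2u⟩
      by_cases h1w : N₁.mulVec w = 0
      · exact ⟨w, hw, h1w, hN2w⟩
      exfalso
      have hN2ne : N₂ ≠ 0 := fun h => h2u (by rw [h, Matrix.zero_mulVec])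
      have hN1ne : N₁ ≠ 0 := fun h => h1w (by rw [h, Matrix.zero_mulVec])
      set z : Fin 2 → ℂ := N₂.mulVec u with hzdef
      have hzker : N₂.mulVec z = 0 := by
        rw [hzdef, Matrix.mulVec_mulVec, h2sq, Matrix.zero_mulVec]
      obtain ⟨γ, hγ⟩ := exists_smul_of_cross z w hw (ker_parallel N₂ hN2ne z w hzker hN2w)
      have hγne : γ ≠ 0 := by
        intro h
        exact h2u (by rw [hγ, h, zero_smul])
      set y : Fin 2 → ℂ := N₁.mulVec w with hydef
      have hyker : N₁.mulVec y = 0 := by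
        rw [hydef, Matrix.mulVec_mulVec, h1sq, Matrix.zero_mulVec]
      obtain ⟨δ, hδ⟩ := exists_smul_of_cross y u hu (ker_parallel N₁ hN1ne y u hyker hN1u)
      have hδne : δ ≠ 0 := by
        intro h
        exact h1w (by rw [hδ, h, zero_smul])
      have hCu : C.mulVec u = (γ * δ) • u := by
        rw [hCdef, ← Matrix.mulVec_mulVec, ← hzdef, hγ, Matrix.mulVec_smul, ← hydef, hδ,
          smul_smul]
      have hCw : C.mulVec w = 0 := by
        rw [hCdef, ← Matrix.mulVec_mulVec, hN2w, Matrix.mulVec_zero]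
      have hD : u 0 * w 1 - u 1 * w 0 ≠ 0 := by
        intro h
        obtain ⟨μ, hμ⟩ := exists_smul_of_cross u w hw (by linear_combination h)
        exact h2u (by rw [hzdef, hμ, Matrix.mulVec_smul, hN2w, smul_zero])
      have f10 : C 0 0 * u 0 + C 0 1 * u 1 = γ * δ * u 0 := by
        have := congrFun hCu 0
        simp only [Pi.smul_apply, smul_eq_mul] at this
        simpa [Matrix.mulVec, dotProduct, Fin.sum_univ_two] using this
      have f11 : C 1 0 * u 0 + C 1 1 * u 1 = γ * δ * u 1 := by
        have := congrFun hCu 1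
        simp only [Pi.smul_apply, smul_eq_mul] at this
        simpa [Matrix.mulVec, dotProduct, Fin.sum_univ_two] using this
      have f20 : C 0 0 * w 0 + C 0 1 * w 1 = 0 := by
        simpa [Matrix.mulVec, dotProduct, Fin.sum_univ_two] using congrFun hCw 0
      have f21 : C 1 0 * w 0 + C 1 1 * w 1 = 0 := by
        simpa [Matrix.mulVec, dotProduct, Fin.sum_univ_two] using congrFun hCw 1
      have htr2' : C 0 0 + C 1 1 = 0 := by
        rw [← Matrix.trace_fin_two]; exact htrC0
      have hzero : γ * δ * (u 0 * w 1 - u 1 * w 0) = 0 := by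
        linear_combination w 0 * f11 - w 1 * f10 + u 1 * f20 - u 0 * f21 +
          (u 0 * w 1 - u 1 * w 0) * htr2'
      exact hD (by
        rcases mul_eq_zero.mp hzero with h | h
        · exact absurd h (mul_ne_zero hγne hδne)
        · exact h)
    obtain ⟨v, hv, h1v, h2v⟩ := hcommon
    have hM1v : M₁.mulVec v = v := by
      rw [hM1, Matrix.add_mulVec, Matrix.one_mulVec, h1v, zero_add]
    have hM2v : M₂.mulVec v = v := by
      rw [hM2, Matrix.add_mulVec, Matrix.one_mulVec, h2v, zero_add]
    refine ⟨⟨v, hv, 1, 1, by simpa using hM1v, by simpa using hM2v⟩, ?_⟩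
    have g1 : ∀ i, M₁ i 0 * v 0 + M₁ i 1 * v 1 = v i := fun i => by
      simpa [Matrix.mulVec, dotProduct, Fin.sum_univ_two] using congrFun hM1v i
    have g2 : ∀ i, M₂ i 0 * v 0 + M₂ i 1 * v 1 = v i := fun i => by
      simpa [Matrix.mulVec, dotProduct, Fin.sum_univ_two] using congrFun hM2v i
    rcases comp_ne v hv with h0 | h1
    · set P : Matrix (Fin 2) (Fin 2) ℂ := !![v 0, 0; v 1, 1] with hPdef
      have hdetP : IsUnit P.det := by
        rw [hPdef, Matrix.det_fin_two_of]
        simpa using h0.isUnit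
      have hcol1 : ∀ k, (M₁ * P) k 0 = P k 0 := fun k => by
        fin_cases k <;>
          simp [hPdef, Matrix.mul_apply, Fin.sum_univ_two] <;>
          (first | linear_combination g1 0 | linear_combination g1 1)
      have hcol2 : ∀ k, (M₂ * P) k 0 = P k 0 := fun k => by
        fin_cases k <;>
          simp [hPdef, Matrix.mul_apply, Fin.sum_univ_two] <;>
          (first | linear_combination g2 0 | linear_combination g2 1)
      exact ⟨P, (Matrix.isUnit_iff_isUnit_det P).mpr hdetP,
        lower_left_zero hdetP hcol1, lower_left_zero hdetP hcol2⟩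
    · set P : Matrix (Fin 2) (Fin 2) ℂ := !![v 0, 1; v 1, 0] with hPdef
      have hdetP : IsUnit P.det := by
        rw [hPdef, Matrix.det_fin_two_of]
        simpa using (neg_ne_zero.mpr h1).isUnit
      have hcol1 : ∀ k, (M₁ * P) k 0 = P k 0 := fun k => by
        fin_cases k <;>
          simp [hPdef, Matrix.mul_apply, Fin.sum_univ_two] <;>
          (first | linear_combination g1 0 | linear_combination g1 1)
      have hcol2 : ∀ k, (M₂ * P) k 0 = P k 0 := fun k => by
        fin_cases k <;>
          simp [hPdef, Matrix.mul_apply, Fin.sum_univ_two] <;>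
          (first | linear_combination g2 0 | linear_combination g2 1)
      exact ⟨P, (Matrix.isUnit_iff_isUnit_det P).mpr hdetP,
        lower_left_zero hdetP hcol1, lower_left_zero hdetP hcol2⟩
end

section
/- Let μ ∈ ℂ with 2μ ∉ ℤ, and let M₁, M₂, M₃ ∈ SL(2,ℂ) each have trace 2, with M∞·M₃·M₂·M₁ = 1 where M∞ = diag(e^{2πiμ}, e^{−2πiμ}). If at least two of the three numbers tr(M₁M₂), tr(M₁M₃), tr(M₃M₂) are equal to 2, then one of the matrices M₁, M₂, M₃ is the identity matrix. In particular, if tr(M₁M₂) = 2 and tr(M₁M₃) = 2, then M₁ = 1. -/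
open Matrix

open Matrix

private lemma sqz {x : ℂ} (h : x^2 = 0) : x = 0 :=
  pow_eq_zero_iff two_ne_zero |>.mp h

/-- proportionality of two "nilpotent parameter triples" with zero pairing -/
private lemma prop_core (a₁ b₁ c₁ a₂ b₂ c₂ : ℂ)
    (h1 : a₁^2 + b₁*c₁ = 0) (h2 : a₂^2 + b₂*c₂ = 0)
    (t12 : 2*a₁*a₂ + b₁*c₂ + c₁*b₂ = 0)
    (hne : ¬(a₁ = 0 ∧ b₁ = 0 ∧ c₁ = 0)) :
    ∃ t : ℂ, a₂ = t*a₁ ∧ b₂ = t*b₁ ∧ c₂ = t*c₁ := by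
  have mab : a₁*b₂ = a₂*b₁ := by
    have h : (a₁*b₂ - a₂*b₁)^2 = 0 := by
      linear_combination b₂^2*h1 + b₁^2*h2 - b₁*b₂*t12
    exact sub_eq_zero.mp (sqz h)
  have mac : a₁*c₂ = a₂*c₁ := by
    have h : (a₁*c₂ - a₂*c₁)^2 = 0 := by
      linear_combination c₂^2*h1 + c₁^2*h2 - c₁*c₂*t12
    exact sub_eq_zero.mp (sqz h)
  have mbc : b₁*c₂ = c₁*b₂ := by
    have h : (b₁*c₂ - c₁*b₂)^2 = 0 := by
      linear_combination (-4*b₂*c₂)*h1 + 4*a₁^2*h2 + (b₁*c₂ + c₁*b₂ - 2*a₁*a₂)*t12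
    exact sub_eq_zero.mp (sqz h)
  by_cases ha : a₁ = 0
  · by_cases hb : b₁ = 0
    · have hc : c₁ ≠ 0 := fun hc => hne ⟨ha, hb, hc⟩
      refine ⟨c₂/c₁, ?_, ?_, ?_⟩
      · field_simp
        have := mac; rw [ha] at this; simp at this
        rcases this with h | h
        · simp [ha, h]
        · exact absurd h hc
      · have hb2 : b₂ = 0 := by
          have := mbc; rw [hb] at this; simp at this
          exact this.resolve_left hc
        simp [hb, hb2]
      · field_simp
    · refine ⟨b₂/b₁, ?_, ?_, ?_⟩
      · field_simp; linear_combination -mab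
      · field_simp
      · field_simp; linear_combination mbc
  · refine ⟨a₂/a₁, ?_, ?_, ?_⟩
    · field_simp
    · field_simp; linear_combination mab
    · field_simp; linear_combination mac


private lemma sqz' {x : ℂ} (h : x^2 = 0) : x = 0 :=
  pow_eq_zero_iff two_ne_zero |>.mp h

/-- contradiction from the relation when all three matrices are unipotent
with a common nilpotent direction -/
private lemma false_of_forms (μ : ℂ) (hμ : ∀ n : ℤ, 2 * μ ≠ (n : ℂ))
    (a b c α β γ : ℂ) (h : a^2 + b*c = 0)
    (hrel : !![Complex.exp (2 * (Real.pi : ℂ) * Complex.I * μ), 0; 0,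
        Complex.exp (-(2 * (Real.pi : ℂ) * Complex.I * μ))] *
      !![1+γ*a, γ*b; γ*c, 1-γ*a] * !![1+β*a, β*b; β*c, 1-β*a] *
      !![1+α*a, α*b; α*c, 1-α*a] = 1) : False := by
  set L := Complex.exp (2 * (Real.pi : ℂ) * Complex.I * μ) with hLdef
  set L' := Complex.exp (-(2 * (Real.pi : ℂ) * Complex.I * μ)) with hL'def
  have hLL' : L * L' = 1 := by
    rw [hLdef, hL'def, ← Complex.exp_add]; simp
  have h00 := congrFun (congrFun hrel 0) 0
  have h11 := congrFun (congrFun hrel 1) 1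
  simp [Matrix.mul_apply, Fin.sum_univ_two, Matrix.one_apply] at h00 h11
  set u : ℂ := α + β + γ with hu
  have e00 : L * (1 + u*a) = 1 := by
    linear_combination h00 - L*((α*β+β*γ+γ*α) + α*β*γ*a)*h
  have e11 : L' * (1 - u*a) = 1 := by
    linear_combination h11 - L'*((α*β+β*γ+γ*α) - α*β*γ*a)*h
  have hsq : (u*a)^2 = 0 := by
    linear_combination (L'*u*a - L')*e00 - e11 + (1 - (u*a)^2)*hLL'
  have hua : u*a = 0 := sqz' hsq
  have hL1 : L = 1 := by linear_combination e00 - L*hua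
  rw [hLdef, Complex.exp_eq_one_iff] at hL1
  obtain ⟨n, hn⟩ := hL1
  have h2πI : (2 * (Real.pi : ℂ) * Complex.I) ≠ 0 := by
    simp [Real.pi_ne_zero, Complex.I_ne_zero]
  have hμn : μ = n := by
    apply mul_left_cancel₀ h2πI
    linear_combination hn
  exact hμ (2*n) (by push_cast; linear_combination 2*hμn)



/-- parameters of a unipotent 2×2 matrix -/
private lemma unip_params (M : Matrix (Fin 2) (Fin 2) ℂ)
    (hd : M.det = 1) (ht : M.trace = 2) :
    (M 0 0 - 1)^2 + M 0 1 * M 1 0 = 0 ∧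
      M = !![1 + (M 0 0 - 1), M 0 1; M 1 0, 1 - (M 0 0 - 1)] := by
  have htr : M 0 0 + M 1 1 = 2 := by simpa [Matrix.trace_fin_two] using ht
  have hdet : M 0 0 * M 1 1 - M 0 1 * M 1 0 = 1 := by
    simpa [Matrix.det_fin_two] using hd
  constructor
  · linear_combination -hdet + M 0 0 * htr
  · rw [Matrix.eta_fin_two M]
    ext i j
    fin_cases i <;> fin_cases j <;> simp <;> linear_combination htr

private lemma trace_pair (M N : Matrix (Fin 2) (Fin 2) ℂ)
    (htM : M.trace = 2) (htN : N.trace = 2) (h : (M * N).trace = 2) :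
    2*(M 0 0 - 1)*(N 0 0 - 1) + M 0 1 * N 1 0 + M 1 0 * N 0 1 = 0 := by
  have htrM : M 0 0 + M 1 1 = 2 := by simpa [Matrix.trace_fin_two] using htM
  have htrN : N 0 0 + N 1 1 = 2 := by simpa [Matrix.trace_fin_two] using htN
  have h' : M 0 0 * N 0 0 + M 0 1 * N 1 0 + (M 1 0 * N 0 1 + M 1 1 * N 1 1) = 2 := by
    simpa [Matrix.trace_fin_two, Matrix.mul_apply, Fin.sum_univ_two] using h
  linear_combination h' + (-(N 1 1))*htrM + (M 0 0 - 2)*htrN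

/-- if `P` is unipotent, not the identity, and pairs to trace `2` with unipotent
`A` and `B`, then all three share a common nilpotent direction -/
private lemma forms_lemma (P A B : Matrix (Fin 2) (Fin 2) ℂ)
    (hdP : P.det = 1) (hdA : A.det = 1) (hdB : B.det = 1)
    (htP : P.trace = 2) (htA : A.trace = 2) (htB : B.trace = 2)
    (tPA : (P * A).trace = 2) (tPB : (P * B).trace = 2) (hP : P ≠ 1) :
    ∃ a b c s t : ℂ, a^2 + b*c = 0 ∧
      P = !![1+1*a, 1*b; 1*c, 1-1*a] ∧
      A = !![1+s*a, s*b; s*c, 1-s*a] ∧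
      B = !![1+t*a, t*b; t*c, 1-t*a] := by
  obtain ⟨hP1, hPf⟩ := unip_params P hdP htP
  obtain ⟨hA1, hAf⟩ := unip_params A hdA htA
  obtain ⟨hB1, hBf⟩ := unip_params B hdB htB
  set a := P 0 0 - 1 with ha
  set b := P 0 1 with hb
  set c := P 1 0 with hc
  have hne : ¬(a = 0 ∧ b = 0 ∧ c = 0) := by
    rintro ⟨h1, h2, h3⟩
    apply hP
    rw [hPf, h1, h2, h3, Matrix.one_fin_two]
    norm_num
  obtain ⟨s, hs1, hs2, hs3⟩ := prop_core a b c (A 0 0 - 1) (A 0 1) (A 1 0) hP1 hA1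
    (trace_pair P A htP htA tPA) hne
  obtain ⟨t, ht1', ht2', ht3'⟩ := prop_core a b c (B 0 0 - 1) (B 0 1) (B 1 0) hP1 hB1
    (trace_pair P B htP htB tPB) hne
  refine ⟨a, b, c, s, t, hP1, ?_, ?_, ?_⟩
  · rw [hPf]; norm_num
  · rw [hAf, hs1, hs2, hs3]
  · rw [hBf, ht1', ht2', ht3']

/-- If `2μ ∉ ℤ`, the three unipotent monodromy matrices satisfy
`M∞ M₃ M₂ M₁ = 1` with `M∞ = diag(e^{2πiμ}, e^{-2πiμ})`, and two of the numbers
`tr(M₁M₂), tr(M₁M₃), tr(M₃M₂)` equal `2`, then one of the `Mᵢ` is the identity.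
In particular `tr(M₁M₂) = 2` and `tr(M₁M₃) = 2` force `M₁ = 1`. -/
theorem two_traces_two_implies_identity (μ : ℂ) (hμ : ∀ n : ℤ, 2 * μ ≠ (n : ℂ))
    (M₁ M₂ M₃ : Matrix (Fin 2) (Fin 2) ℂ)
    (hd1 : M₁.det = 1) (hd2 : M₂.det = 1) (hd3 : M₃.det = 1)
    (ht1 : M₁.trace = 2) (ht2 : M₂.trace = 2) (ht3 : M₃.trace = 2)
    (hrel : !![Complex.exp (2 * (Real.pi : ℂ) * Complex.I * μ), 0; 0,
        Complex.exp (-(2 * (Real.pi : ℂ) * Complex.I * μ))] * M₃ * M₂ * M₁ = 1) :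
    ((((M₁ * M₂).trace = 2 ∧ (M₁ * M₃).trace = 2) ∨
      ((M₁ * M₂).trace = 2 ∧ (M₃ * M₂).trace = 2) ∨
      ((M₁ * M₃).trace = 2 ∧ (M₃ * M₂).trace = 2)) →
        (M₁ = 1 ∨ M₂ = 1 ∨ M₃ = 1)) ∧
    ((M₁ * M₂).trace = 2 → (M₁ * M₃).trace = 2 → M₁ = 1) := by
  have case1 : (M₁ * M₂).trace = 2 → (M₁ * M₃).trace = 2 → M₁ = 1 := by
    intro t12 t13
    by_contra hne
    obtain ⟨a, b, c, s, t, habc, hPf, hAf, hBf⟩ :=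
      forms_lemma M₁ M₂ M₃ hd1 hd2 hd3 ht1 ht2 ht3 t12 t13 hne
    rw [hPf, hAf, hBf] at hrel
    exact false_of_forms μ hμ a b c 1 s t habc hrel
  have case2 : (M₁ * M₂).trace = 2 → (M₃ * M₂).trace = 2 → M₂ = 1 := by
    intro t12 t23
    by_contra hne
    obtain ⟨a, b, c, s, t, habc, hPf, hAf, hBf⟩ :=
      forms_lemma M₂ M₁ M₃ hd2 hd1 hd3 ht2 ht1 ht3
        (by rw [Matrix.trace_mul_comm]; exact t12) (by rw [Matrix.trace_mul_comm]; exact t23) hne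
    rw [hPf, hAf, hBf] at hrel
    exact false_of_forms μ hμ a b c s 1 t habc hrel
  have case3 : (M₁ * M₃).trace = 2 → (M₃ * M₂).trace = 2 → M₃ = 1 := by
    intro t13 t23
    by_contra hne
    obtain ⟨a, b, c, s, t, habc, hPf, hAf, hBf⟩ :=
      forms_lemma M₃ M₁ M₂ hd3 hd1 hd2 ht3 ht1 ht2
        (by rw [Matrix.trace_mul_comm]; exact t13) t23 hne
    rw [hPf, hAf, hBf] at hrel
    exact false_of_forms μ hμ a b c s t 1 habc hrel
  refine ⟨?_, case1⟩
  rintro (⟨u, v⟩ | ⟨u, v⟩ | ⟨u, v⟩)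
  · exact Or.inl (case1 u v)
  · exact Or.inr (Or.inl (case2 u v))
  · exact Or.inr (Or.inr (case3 u v))
end

section
/- Let μ ∈ ℂ and let M₁, M₂, M₃ ∈ SL(2,ℂ) each have trace 2, with M∞·M₃·M₂·M₁ = 1 where M∞ = diag(e^{2πiμ}, e^{−2πiμ}), and suppose tr(M₁M₂) ≠ 2. Then there exist complex numbers x₁, x₂, x₃ with x₁ ≠ 0 and an invertible P ∈ GL(2,ℂ) such that P⁻¹M₁P = M₁(x), P⁻¹M₂P = M₂(x), P⁻¹M₃P = M₃(x) in the canonical form; moreover tr(M₁M₂) = 2 − x₁², tr(M₃M₂) = 2 − x₂², tr(M₁M₃) = 2 − x₃², and x₁² + x₂² + x₃² − x₁x₂x₃ = 4 sin²(πμ). -/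
/-!
Choose `x₁ ≠ 0` with `x₁² = 2 - tr (M₁ M₂)` and put `E = M₁ - 1`, `N = M₂ - 1`. By
Cayley–Hamilton both square to zero, and since they are traceless, `N E + E N = tr (N E) = -x₁²`.
For `w` spanning `ker N` and `v = -E w / x₁` this gives `E v = 0`, `E w = -x₁ v` and `N v = x₁ w`,
so `v` and `w` are independent and in the basis `(v, w)` the matrices `M₁`, `M₂` become `M₁(x)`,
`M₂(x)`. The conjugate `T` of `M₃` has trace 2 and determinant 1, i.e. `(T₁₁ - 1)² = -T₁₂ T₂₁`,
which is exactly what is needed to solve `x₂² = -x₁ T₁₂`, `x₃² = x₁ T₂₁`, `x₂ x₃ = x₁ (T₁₁ - 1)`,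
i.e. `T = M₃(x)`. The traces are then computed in the canonical form; the last identity is
`tr (M₃ M₂ M₁) = tr M∞⁻¹ = 2 cos 2πμ`.
-/

open Matrix Polynomial

section Unipotent

variable {R : Type*} [CommRing R] {M : Matrix (Fin 2) (Fin 2) R}

lemma trace_sub_one_eq_zero (ht : M.trace = 2) : (M - 1).trace = 0 := by
  rw [trace_sub, trace_one, ht, Fintype.card_fin]
  norm_num

lemma sub_one_mul_self_eq_zero [Nontrivial R] (ht : M.trace = 2) (hd : M.det = 1) :
    (M - 1) * (M - 1) = 0 := by
  have h := M.aeval_self_charpoly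
  rw [charpoly_fin_two, ht, hd] at h
  simp only [map_one, map_add, aeval_sub, map_pow, aeval_X, map_mul, map_ofNat] at h
  rw [← h]
  noncomm_ring

lemma det_sub_one_eq_zero [IsDomain R] (ht : M.trace = 2) (hd : M.det = 1) :
    (M - 1).det = 0 := by
  have h := congrArg det (sub_one_mul_self_eq_zero ht hd)
  rwa [det_mul, det_zero, mul_self_eq_zero] at h

end Unipotent

-- Polarized Cayley–Hamilton identity.
lemma mul_add_mul_eq_trace_smul_one {R : Type*} [CommRing R] {A B : Matrix (Fin 2) (Fin 2) R}
    (hA : A.trace = 0) (hB : B.trace = 0) : A * B + B * A = (A * B).trace • 1 := by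
  rw [trace_fin_two] at hA hB
  ext i j
  fin_cases i <;> fin_cases j <;>
    simp only [Fin.zero_eta, Fin.mk_one, Fin.isValue, Matrix.add_apply, mul_apply,
      Fin.sum_univ_two, trace_fin_two, Matrix.smul_apply, one_apply_eq, one_apply_ne, ne_eq,
      zero_ne_one, one_ne_zero, not_false_eq_true, smul_eq_mul, mul_one, mul_zero]
  · linear_combination B 0 0 * hA - A 1 1 * hB
  · linear_combination B 0 1 * hA + A 0 1 * hB
  · linear_combination B 1 0 * hA + A 1 0 * hB
  · linear_combination B 1 1 * hA - A 0 0 * hB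

section ColMatrix

variable {R : Type*} [CommRing R]

def colMatrix (p q : Fin 2 → R) : Matrix (Fin 2) (Fin 2) R := (of ![p, q])ᵀ

lemma mul_colMatrix_eq_colMatrix_mul {M : Matrix (Fin 2) (Fin 2) R} {p q : Fin 2 → R}
    {a b c d : R} (hp : M *ᵥ p = a • p + c • q) (hq : M *ᵥ q = b • p + d • q) :
    M * colMatrix p q = colMatrix p q * !![a, b; c, d] := by
  ext i j
  have hpi := congrFun hp i
  have hqi := congrFun hq i
  fin_cases j <;>
    simp only [colMatrix, mulVec, dotProduct, mul_apply, Fin.sum_univ_two, transpose_apply,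
      of_apply, cons_val', cons_val_fin_one, cons_val_zero, cons_val_one, Pi.add_apply,
      Pi.smul_apply, smul_eq_mul, Fin.zero_eta, Fin.mk_one, Fin.isValue] at hpi hqi ⊢
  · linear_combination hpi
  · linear_combination hqi

lemma isUnit_colMatrix_iff {K : Type*} [Field K] {p q : Fin 2 → K} :
    IsUnit (colMatrix p q) ↔ LinearIndependent K ![p, q] :=
  linearIndependent_cols_iff_isUnit.symm

lemma linearIndependent_pair_of_mulVec {n K : Type*} [Fintype n] [Field K]
    {N : Matrix n n K} {v w : n → K} {c : K} (hw : w ≠ 0) (hc : c ≠ 0)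
    (hNw : N *ᵥ w = 0) (hNv : N *ᵥ v = c • w) : LinearIndependent K ![v, w] := by
  refine LinearIndependent.pair_iff.mpr fun s t hst => ?_
  have hs : s = 0 := by
    have h := congrArg (N *ᵥ ·) hst
    simp only [mulVec_add, mulVec_smul, hNv, hNw, smul_zero, add_zero, mulVec_zero,
      smul_smul, smul_eq_zero, mul_eq_zero] at h
    tauto
  subst hs
  simpa [hw] using hst

end ColMatrix

section Conjugation

variable {n R : Type*} [Fintype n] [DecidableEq n] [CommRing R] {P : Matrix n n R}

lemma conj_mul_distrib (hP : IsUnit P) (A B : Matrix n n R) :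
    P⁻¹ * (A * B) * P = (P⁻¹ * A * P) * (P⁻¹ * B * P) := by
  simp only [Matrix.mul_assoc, mul_nonsing_inv_cancel_left _ _ ((isUnit_iff_isUnit_det P).mp hP)]

lemma conj_eq_of_mul_eq_mul {M C : Matrix n n R} (hP : IsUnit P) (h : M * P = P * C) :
    P⁻¹ * M * P = C := by
  rw [Matrix.mul_assoc, h, nonsing_inv_mul_cancel_left P _ ((isUnit_iff_isUnit_det P).mp hP)]

end Conjugation

section Canonical

variable {K : Type*} [Field K]

def canonicalM₁ (x₁ : K) : Matrix (Fin 2) (Fin 2) K := !![1, -x₁; 0, 1]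

def canonicalM₂ (x₁ : K) : Matrix (Fin 2) (Fin 2) K := !![1, 0; x₁, 1]

def canonicalM₃ (x₁ x₂ x₃ : K) : Matrix (Fin 2) (Fin 2) K :=
  !![1 + x₂ * x₃ / x₁, -(x₂ ^ 2) / x₁; x₃ ^ 2 / x₁, 1 - x₂ * x₃ / x₁]

lemma exists_conj_canonicalM₁_canonicalM₂ {M₁ M₂ : Matrix (Fin 2) (Fin 2) K}
    (hd₁ : M₁.det = 1) (ht₁ : M₁.trace = 2) (hd₂ : M₂.det = 1) (ht₂ : M₂.trace = 2)
    {x : K} (hx : x ≠ 0) (htr : (M₁ * M₂).trace = 2 - x ^ 2) :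
    ∃ P : Matrix (Fin 2) (Fin 2) K, IsUnit P ∧
      M₁ * P = P * canonicalM₁ x ∧ M₂ * P = P * canonicalM₂ x := by
  obtain ⟨w, hw, hNw⟩ := exists_mulVec_eq_zero_iff.mpr (det_sub_one_eq_zero ht₂ hd₂)
  set v := -x⁻¹ • ((M₁ - 1) *ᵥ w) with hv
  have hEw : (M₁ - 1) *ᵥ w = -x • v := by
    rw [hv, smul_smul, neg_mul_neg, mul_inv_cancel₀ hx, one_smul]
  have hEv : (M₁ - 1) *ᵥ v = 0 := by
    rw [hv, mulVec_smul, mulVec_mulVec, sub_one_mul_self_eq_zero ht₁ hd₁, zero_mulVec, smul_zero]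
  have hNE : ((M₂ - 1) * (M₁ - 1)).trace = -x ^ 2 := by
    simp only [Matrix.mul_sub, Matrix.sub_mul, Matrix.mul_one, Matrix.one_mul, trace_sub,
      trace_one, Fintype.card_fin, trace_mul_comm M₂ M₁, htr, ht₁, ht₂]
    norm_num
  have hNv : (M₂ - 1) *ᵥ v = x • w := by
    have hanti := mul_add_mul_eq_trace_smul_one (trace_sub_one_eq_zero ht₂)
      (trace_sub_one_eq_zero ht₁)
    rw [hNE, ← eq_sub_iff_add_eq] at hanti
    rw [hv, mulVec_smul, mulVec_mulVec, hanti, sub_mulVec, ← mulVec_mulVec, hNw, mulVec_zero,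
      sub_zero, smul_mulVec, one_mulVec, smul_smul]
    congr 1
    field_simp
  have hM : ∀ (M : Matrix (Fin 2) (Fin 2) K) u, M *ᵥ u = (M - 1) *ᵥ u + u := fun M u => by
    rw [sub_mulVec, one_mulVec, sub_add_cancel]
  refine ⟨colMatrix v w,
    isUnit_colMatrix_iff.mpr (linearIndependent_pair_of_mulVec hw hx hNw hNv),
    mul_colMatrix_eq_colMatrix_mul ?_ ?_, mul_colMatrix_eq_colMatrix_mul ?_ ?_⟩
  · rw [hM, hEv]; simp
  · rw [hM, hEw]; simp
  · rw [hM, hNv]; simp [add_comm]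
  · rw [hM, hNw]; simp

lemma exists_sq_eq_sq_eq_mul_eq [IsAlgClosed K] {a b c : K} (h : a ^ 2 = b * c) :
    ∃ y z : K, y ^ 2 = b ∧ z ^ 2 = c ∧ y * z = a := by
  obtain ⟨y, hy⟩ := IsAlgClosed.exists_pow_nat_eq b two_pos
  rcases eq_or_ne y 0 with rfl | hy0
  · obtain ⟨z, hz⟩ := IsAlgClosed.exists_pow_nat_eq c two_pos
    have ha : a = 0 := by simpa [← hy] using h
    exact ⟨0, z, hy, hz, by simp [ha]⟩
  · refine ⟨y, a / y, hy, ?_, by field_simp⟩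
    rw [div_pow, h, ← hy]
    field_simp

variable {x₁ : K}

lemma exists_eq_canonicalM₃ [IsAlgClosed K] {T : Matrix (Fin 2) (Fin 2) K}
    (hd : T.det = 1) (ht : T.trace = 2) (hx₁ : x₁ ≠ 0) :
    ∃ x₂ x₃ : K, T = canonicalM₃ x₁ x₂ x₃ := by
  rw [det_fin_two] at hd
  rw [trace_fin_two] at ht
  obtain ⟨x₂, x₃, h₂, h₃, h₂₃⟩ := exists_sq_eq_sq_eq_mul_eq
    (a := (T 0 0 - 1) * x₁) (b := -(T 0 1 * x₁)) (c := T 1 0 * x₁)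
    (by linear_combination x₁ ^ 2 * (T 0 0 * ht - hd))
  refine ⟨x₂, x₃, ?_⟩
  rw [eta_fin_two T, canonicalM₃, h₂₃, h₂, h₃]
  simp only [neg_neg, mul_div_cancel_right₀ _ hx₁, add_sub_cancel]
  rw [show T 1 1 = 1 - (T 0 0 - 1) by linear_combination ht]

lemma trace_canonicalM₃_mul_canonicalM₂ (hx₁ : x₁ ≠ 0) (x₂ x₃ : K) :
    (canonicalM₃ x₁ x₂ x₃ * canonicalM₂ x₁).trace = 2 - x₂ ^ 2 := by
  rw [canonicalM₃, canonicalM₂, mul_fin_two, trace_fin_two_of]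
  field_simp
  ring

lemma trace_canonicalM₁_mul_canonicalM₃ (hx₁ : x₁ ≠ 0) (x₂ x₃ : K) :
    (canonicalM₁ x₁ * canonicalM₃ x₁ x₂ x₃).trace = 2 - x₃ ^ 2 := by
  rw [canonicalM₁, canonicalM₃, mul_fin_two, trace_fin_two_of]
  field_simp
  ring

lemma trace_canonicalM₃_mul_canonicalM₂_mul_canonicalM₁ (hx₁ : x₁ ≠ 0) (x₂ x₃ : K) :
    (canonicalM₃ x₁ x₂ x₃ * canonicalM₂ x₁ * canonicalM₁ x₁).trace =
      2 - (x₁ ^ 2 + x₂ ^ 2 + x₃ ^ 2 - x₁ * x₂ * x₃) := by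
  rw [canonicalM₃, canonicalM₂, canonicalM₁, mul_fin_two, mul_fin_two, trace_fin_two_of]
  field_simp
  ring

lemma trace_eq_of_diagonal_mul_eq_one {a b : K} {M : Matrix (Fin 2) (Fin 2) K}
    (h : !![a, 0; 0, b] * M = 1) : M.trace = a⁻¹ + b⁻¹ := by
  have h₀ := congrFun (congrFun h 0) 0
  have h₁ := congrFun (congrFun h 1) 1
  simp only [Fin.isValue, mul_apply, of_apply, cons_val', cons_val_fin_one, cons_val_zero,
    Fin.sum_univ_two, cons_val_one, zero_mul, add_zero, one_apply_eq, zero_add] at h₀ h₁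
  rw [trace_fin_two, eq_inv_of_mul_eq_one_right h₀, eq_inv_of_mul_eq_one_right h₁]

end Canonical

lemma two_sub_exp_inv_add_exp_neg_inv (μ : ℂ) :
    2 - ((Complex.exp (2 * (Real.pi : ℂ) * Complex.I * μ))⁻¹ +
      (Complex.exp (-(2 * (Real.pi : ℂ) * Complex.I * μ)))⁻¹) =
      4 * Complex.sin ((Real.pi : ℂ) * μ) ^ 2 := by
  rw [← Complex.exp_neg, ← Complex.exp_neg, neg_neg]
  have h₁ := Complex.two_cos (2 * ((Real.pi : ℂ) * μ))
  have h₂ := Complex.cos_two_mul_eq_one_sub ((Real.pi : ℂ) * μ)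
  ring_nf at h₁ h₂ ⊢
  linear_combination h₁ - 2 * h₂

/-- Canonical form of the triple of unipotent monodromy matrices with
`M∞ M₃ M₂ M₁ = 1`, `M∞ = diag(e^{2πiμ}, e^{-2πiμ})`, when `tr(M₁M₂) ≠ 2`: there are
`x₁ ≠ 0, x₂, x₃` and an invertible `P` conjugating the triple to the canonical form,
with the trace relations and `x₁² + x₂² + x₃² - x₁x₂x₃ = 4 sin²(πμ)`. -/
theorem triple_canonical_form (μ : ℂ) (M₁ M₂ M₃ : Matrix (Fin 2) (Fin 2) ℂ)
    (hd1 : M₁.det = 1) (hd2 : M₂.det = 1) (hd3 : M₃.det = 1)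
    (ht1 : M₁.trace = 2) (ht2 : M₂.trace = 2) (ht3 : M₃.trace = 2)
    (hrel : !![Complex.exp (2 * (Real.pi : ℂ) * Complex.I * μ), 0; 0,
        Complex.exp (-(2 * (Real.pi : ℂ) * Complex.I * μ))] * M₃ * M₂ * M₁ = 1)
    (htr12 : (M₁ * M₂).trace ≠ 2) :
    ∃ (x₁ x₂ x₃ : ℂ) (P : Matrix (Fin 2) (Fin 2) ℂ), x₁ ≠ 0 ∧ IsUnit P ∧
      P⁻¹ * M₁ * P = !![1, -x₁; 0, 1] ∧
      P⁻¹ * M₂ * P = !![1, 0; x₁, 1] ∧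
      P⁻¹ * M₃ * P = !![1 + x₂ * x₃ / x₁, -(x₂ ^ 2) / x₁;
                        x₃ ^ 2 / x₁, 1 - x₂ * x₃ / x₁] ∧
      (M₁ * M₂).trace = 2 - x₁ ^ 2 ∧
      (M₃ * M₂).trace = 2 - x₂ ^ 2 ∧
      (M₁ * M₃).trace = 2 - x₃ ^ 2 ∧
      x₁ ^ 2 + x₂ ^ 2 + x₃ ^ 2 - x₁ * x₂ * x₃ =
        4 * Complex.sin ((Real.pi : ℂ) * μ) ^ 2 := by
  obtain ⟨x₁, hx₁⟩ := IsAlgClosed.exists_pow_nat_eq (2 - (M₁ * M₂).trace) two_pos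
  have htr₁₂ : (M₁ * M₂).trace = 2 - x₁ ^ 2 := by rw [hx₁, sub_sub_cancel]
  have hx₁0 : x₁ ≠ 0 := by rintro rfl; simp [htr₁₂] at htr12
  obtain ⟨P, hP, h₁, h₂⟩ := exists_conj_canonicalM₁_canonicalM₂ hd1 ht1 hd2 ht2 hx₁0 htr₁₂
  replace h₁ := conj_eq_of_mul_eq_mul hP h₁
  replace h₂ := conj_eq_of_mul_eq_mul hP h₂
  obtain ⟨x₂, x₃, h₃⟩ := exists_eq_canonicalM₃ (T := P⁻¹ * M₃ * P)
    (by rw [det_conj' hP, hd3]) (by rw [trace_conj' hP, ht3]) hx₁0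
  refine ⟨x₁, x₂, x₃, P, hx₁0, hP, h₁, h₂, h₃, htr₁₂, ?_, ?_, ?_⟩
  · rw [← trace_conj' hP, conj_mul_distrib hP, h₃, h₂, trace_canonicalM₃_mul_canonicalM₂ hx₁0]
  · rw [← trace_conj' hP, conj_mul_distrib hP, h₃, h₁, trace_canonicalM₁_mul_canonicalM₃ hx₁0]
  · have hprod := trace_eq_of_diagonal_mul_eq_one (M := M₃ * M₂ * M₁)
      (by simpa only [Matrix.mul_assoc] using hrel)
    rw [← trace_conj' hP, conj_mul_distrib hP, conj_mul_distrib hP, h₃, h₂, h₁,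
      trace_canonicalM₃_mul_canonicalM₂_mul_canonicalM₁ hx₁0] at hprod
    rw [← two_sub_exp_inv_add_exp_neg_inv, ← hprod, sub_sub_cancel]
end

section
/- Let (x₁,x₂,x₃) and (x'₁,x'₂,x'₃) be triples of complex numbers with x₁ ≠ 0, x'₁ ≠ 0, (x₂,x₃) ≠ (0,0), and (x'₂,x'₃) ≠ (0,0) (so that none of the associated canonical matrices equals the identity). Then there exists an invertible matrix T ∈ GL(2,ℂ) with Mᵢ(x) = T⁻¹Mᵢ(x')T for i = 1,2,3 if and only if (x'₁,x'₂,x'₃) is equal to (x₁,x₂,x₃) up to changing the signs of exactly two of the three coordinates (or changing no signs). -/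
open Matrix

/-! An invertible `T` with `M₁(x) = T⁻¹ M₁(x') T` and `M₂(x) = T⁻¹ M₂(x') T` must be diagonal, and
comparing the off-diagonal entries gives `x₁' = ±x₁` with `T` a scalar multiple of `1` or of
`diag(1, -1)` respectively. Conjugation by `diag(1, -1)` replaces `(x₁, x₂, x₃)` by
`(-x₁, x₂, -x₃)`, and `M₃(x)` depends only on `x₂ x₃`, `x₂²`, `x₃²`, which for fixed `x₁ ≠ 0`
determine `(x₂, x₃)` up to a common sign. -/

/-- The canonical matrix `M₁(x)`. -/
def canM₁ (x₁ : ℂ) : Matrix (Fin 2) (Fin 2) ℂ := !![1, -x₁; 0, 1]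

/-- The canonical matrix `M₂(x)`. -/
def canM₂ (x₁ : ℂ) : Matrix (Fin 2) (Fin 2) ℂ := !![1, 0; x₁, 1]

/-- The canonical matrix `M₃(x)`. -/
noncomputable def canM₃ (x₁ x₂ x₃ : ℂ) : Matrix (Fin 2) (Fin 2) ℂ :=
  !![1 + x₂ * x₃ / x₁, -(x₂ ^ 2) / x₁; x₃ ^ 2 / x₁, 1 - x₂ * x₃ / x₁]

lemma eq_and_eq_or_neg_and_neg_of_sq_eq_sq_of_mul_eq {R : Type*} [CommRing R] [NoZeroDivisors R]
    [NeZero (2 : R)] {u v u' v' : R}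
    (hu : u' ^ 2 = u ^ 2) (hv : v' ^ 2 = v ^ 2) (huv : u' * v' = u * v) :
    (u' = u ∧ v' = v) ∨ (u' = -u ∧ v' = -v) := by
  rcases sq_eq_sq_iff_eq_or_eq_neg.mp hu with rfl | rfl <;>
    rcases sq_eq_sq_iff_eq_or_eq_neg.mp hv with rfl | rfl
  · exact .inl ⟨rfl, rfl⟩
  · have : u' * v = 0 := by
      have : (2 : R) * (u' * v) = 0 := by linear_combination -huv
      simpa [two_ne_zero] using this
    rcases mul_eq_zero.mp this with rfl | rfl <;> simp
  · have : u * v' = 0 := by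
      have : (2 : R) * (u * v') = 0 := by linear_combination -huv
      simpa [two_ne_zero] using this
    rcases mul_eq_zero.mp this with rfl | rfl <;> simp
  · exact .inr ⟨rfl, rfl⟩

theorem Matrix.mul_eq_mul_of_eq_inv_mul_mul {n R : Type*} [Fintype n] [DecidableEq n] [CommRing R]
    {A B T : Matrix n n R} (hT : IsUnit T) (h : A = T⁻¹ * B * T) : B * T = T * A := by
  rw [h, ← Matrix.mul_assoc, ← Matrix.mul_assoc,
    Matrix.mul_nonsing_inv _ ((isUnit_iff_isUnit_det T).mp hT), Matrix.one_mul]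

theorem Matrix.eq_mul_mul_of_mul_smul_eq_smul_mul {n K : Type*} [Fintype n] [DecidableEq n] [Field K]
    {A B P : Matrix n n K} {a : K} (ha : a ≠ 0) (hP : P * P = 1)
    (h : B * (a • P) = (a • P) * A) : A = P * B * P := by
  rw [Matrix.mul_smul, Matrix.smul_mul] at h
  rw [Matrix.mul_assoc, smul_right_injective _ ha h, ← Matrix.mul_assoc, hP, Matrix.one_mul]

def signDiag : Matrix (Fin 2) (Fin 2) ℂ := !![1, 0; 0, -1]

lemma signDiag_mul_self : signDiag * signDiag = 1 := by
  simp [signDiag, Matrix.one_fin_two]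

lemma inv_signDiag : signDiag⁻¹ = signDiag := Matrix.inv_eq_left_inv signDiag_mul_self

lemma isUnit_signDiag : IsUnit signDiag := IsUnit.of_mul_eq_one _ signDiag_mul_self

lemma signDiag_mul_canM₁_mul_signDiag (x : ℂ) : signDiag * canM₁ x * signDiag = canM₁ (-x) := by
  simp [signDiag, canM₁]

lemma signDiag_mul_canM₂_mul_signDiag (x : ℂ) : signDiag * canM₂ x * signDiag = canM₂ (-x) := by
  simp [signDiag, canM₂]

lemma signDiag_mul_canM₃_mul_signDiag (x₁ x₂ x₃ : ℂ) :
    signDiag * canM₃ x₁ x₂ x₃ * signDiag = canM₃ (-x₁) x₂ (-x₃) := by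
  simp [signDiag, canM₃, div_neg, neg_div]

lemma canM₃_neg_neg (x₁ x₂ x₃ : ℂ) : canM₃ x₁ (-x₂) (-x₃) = canM₃ x₁ x₂ x₃ := by
  simp [canM₃]

lemma eq_and_eq_or_neg_and_neg_of_canM₃_eq {x₁ x₂ x₃ y₂ y₃ : ℂ} (hx₁ : x₁ ≠ 0)
    (h : canM₃ x₁ x₂ x₃ = canM₃ x₁ y₂ y₃) : (y₂ = x₂ ∧ y₃ = x₃) ∨ (y₂ = -x₂ ∧ y₃ = -x₃) := by
  have hp : y₂ * y₃ = x₂ * x₃ := by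
    simpa [canM₃, div_left_inj' hx₁, eq_comm] using congrFun₂ h 0 0
  have h₂ : y₂ ^ 2 = x₂ ^ 2 := by
    simpa [canM₃, neg_div, div_left_inj' hx₁, eq_comm] using congrFun₂ h 0 1
  have h₃ : y₃ ^ 2 = x₃ ^ 2 := by
    simpa [canM₃, div_left_inj' hx₁, eq_comm] using congrFun₂ h 1 0
  exact eq_and_eq_or_neg_and_neg_of_sq_eq_sq_of_mul_eq h₂ h₃ hp

lemma exists_eq_smul_of_intertwines_canM₁_canM₂ {x x' : ℂ} {T : Matrix (Fin 2) (Fin 2) ℂ}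
    (hx : x ≠ 0) (hT : IsUnit T) (h₁ : canM₁ x' * T = T * canM₁ x)
    (h₂ : canM₂ x' * T = T * canM₂ x) :
    ∃ a : ℂ, a ≠ 0 ∧ ((x' = x ∧ T = a • 1) ∨ (x' = -x ∧ T = a • signDiag)) := by
  have hc : T 1 0 = 0 := by simpa [canM₁, mul_apply, hx] using congrFun₂ h₁ 1 1
  have hb : T 0 1 = 0 := by simpa [canM₂, mul_apply, hx] using congrFun₂ h₂ 0 0
  have hd : x' * T 1 1 = T 0 0 * x := by simpa [canM₁, mul_apply, hb] using congrFun₂ h₁ 0 1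
  have ha : x' * T 0 0 = T 1 1 * x := by simpa [canM₂, mul_apply, hc] using congrFun₂ h₂ 1 0
  have hdet : T 0 0 * T 1 1 ≠ 0 := by
    simpa [det_fin_two, hb, hc] using ((isUnit_iff_isUnit_det T).mp hT).ne_zero
  have hsq : x' ^ 2 = x ^ 2 :=
    mul_left_cancel₀ (left_ne_zero_of_mul hdet) (by linear_combination x' * ha + x * hd)
  have hT : T = !![T 0 0, 0; 0, T 1 1] := by
    ext i j; fin_cases i <;> fin_cases j <;> simp [hb, hc]
  refine ⟨T 0 0, left_ne_zero_of_mul hdet, ?_⟩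
  rcases sq_eq_sq_iff_eq_or_eq_neg.mp hsq with rfl | rfl
  · have : T 1 1 = T 0 0 := mul_left_cancel₀ hx (by linear_combination hd)
    refine .inl ⟨rfl, ?_⟩
    rw [hT, this, Matrix.one_fin_two, Matrix.smul_of]
    simp
  · have : T 1 1 = -T 0 0 := mul_left_cancel₀ hx (by linear_combination -hd)
    refine .inr ⟨rfl, ?_⟩
    rw [hT, this, signDiag, Matrix.smul_of]
    simp

theorem canonical_triples_conjugated_iff_general (x₁ x₂ x₃ x₁' x₂' x₃' : ℂ)
    (h1 : x₁ ≠ 0) :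
    (∃ T : Matrix (Fin 2) (Fin 2) ℂ, IsUnit T ∧
      canM₁ x₁ = T⁻¹ * canM₁ x₁' * T ∧
      canM₂ x₁ = T⁻¹ * canM₂ x₁' * T ∧
      canM₃ x₁ x₂ x₃ = T⁻¹ * canM₃ x₁' x₂' x₃' * T) ↔
    ((x₁', x₂', x₃') = (x₁, x₂, x₃) ∨
     (x₁', x₂', x₃') = (x₁, -x₂, -x₃) ∨
     (x₁', x₂', x₃') = (-x₁, x₂, -x₃) ∨
     (x₁', x₂', x₃') = (-x₁, -x₂, x₃)) := by
  simp only [Prod.mk.injEq]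
  constructor
  · rintro ⟨T, hT, h₁, h₂, h₃⟩
    obtain ⟨a, ha, ⟨rfl, rfl⟩ | ⟨rfl, rfl⟩⟩ := exists_eq_smul_of_intertwines_canM₁_canM₂ h1 hT
      (mul_eq_mul_of_eq_inv_mul_mul hT h₁) (mul_eq_mul_of_eq_inv_mul_mul hT h₂)
    · have h := eq_mul_mul_of_mul_smul_eq_smul_mul ha (Matrix.mul_one 1)
        (mul_eq_mul_of_eq_inv_mul_mul hT h₃)
      rw [Matrix.one_mul, Matrix.mul_one] at h
      rcases eq_and_eq_or_neg_and_neg_of_canM₃_eq h1 h with ⟨rfl, rfl⟩ | ⟨rfl, rfl⟩ <;> simp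
    · have h := eq_mul_mul_of_mul_smul_eq_smul_mul ha signDiag_mul_self
        (mul_eq_mul_of_eq_inv_mul_mul hT h₃)
      rw [signDiag_mul_canM₃_mul_signDiag, neg_neg] at h
      rcases eq_and_eq_or_neg_and_neg_of_canM₃_eq h1 h with ⟨rfl, h₃'⟩ | ⟨rfl, h₃'⟩ <;>
        simp [neg_eq_iff_eq_neg.mp h₃']
  · rintro (⟨rfl, rfl, rfl⟩ | ⟨rfl, rfl, rfl⟩ | ⟨rfl, rfl, rfl⟩ | ⟨rfl, rfl, rfl⟩)
    · exact ⟨1, isUnit_one, by simp, by simp, by simp⟩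
    · exact ⟨1, isUnit_one, by simp, by simp, by simp [canM₃_neg_neg]⟩
    all_goals
      refine ⟨signDiag, isUnit_signDiag, ?_, ?_, ?_⟩ <;>
        simp only [inv_signDiag, signDiag_mul_canM₁_mul_signDiag, signDiag_mul_canM₂_mul_signDiag,
          signDiag_mul_canM₃_mul_signDiag, neg_neg, canM₃_neg_neg]

/-- Two canonical triples are conjugated by an invertible matrix `T`
if and only if the parameter triples coincide up to changing the signs of exactly two
of the three coordinates (or changing no signs). -/
theorem canonical_triples_conjugated_iff (x₁ x₂ x₃ x₁' x₂' x₃' : ℂ)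
    (h1 : x₁ ≠ 0) (h1' : x₁' ≠ 0)
    (h23 : ¬(x₂ = 0 ∧ x₃ = 0)) (h23' : ¬(x₂' = 0 ∧ x₃' = 0)) :
    (∃ T : Matrix (Fin 2) (Fin 2) ℂ, IsUnit T ∧
      canM₁ x₁ = T⁻¹ * canM₁ x₁' * T ∧
      canM₂ x₁ = T⁻¹ * canM₂ x₁' * T ∧
      canM₃ x₁ x₂ x₃ = T⁻¹ * canM₃ x₁' x₂' x₃' * T) ↔
    ((x₁', x₂', x₃') = (x₁, x₂, x₃) ∨
     (x₁', x₂', x₃') = (x₁, -x₂, -x₃) ∨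
     (x₁', x₂', x₃') = (-x₁, x₂, -x₃) ∨
     (x₁', x₂', x₃') = (-x₁, -x₂, x₃)) :=
  canonical_triples_conjugated_iff_general x₁ x₂ x₃ x₁' x₂' x₃' h1
end

section
/- Let (x₁,x₂,x₃) ∈ ℂ³ be an admissible triple whose orbit under the group of bijections generated by β₁ and β₂ is finite. Then for each i = 1,2,3 there exists a rational number rᵢ with 0 ≤ rᵢ ≤ 1 such that xᵢ = −2 cos(π rᵢ). In particular each xᵢ is real and |xᵢ| ≤ 2. -/
/-- The braid-group generator `β₁`, as a bijection of `ℂ³`. -/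
def braidEquiv₁ : Equiv.Perm (ℂ × ℂ × ℂ) where
  toFun p := (-p.1, p.2.2 - p.1 * p.2.1, p.2.1)
  invFun p := (-p.1, p.2.2, p.2.1 - p.1 * p.2.2)
  left_inv := by rintro ⟨a, b, c⟩; ext <;> simp <;> ring
  right_inv := by rintro ⟨a, b, c⟩; ext <;> simp <;> ring

/-- The braid-group generator `β₂`, as a bijection of `ℂ³`. -/
def braidEquiv₂ : Equiv.Perm (ℂ × ℂ × ℂ) where
  toFun p := (p.2.2, -p.2.1, p.1 - p.2.1 * p.2.2)
  invFun p := (p.2.2 - p.1 * p.2.1, -p.2.1, p.1)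
  left_inv := by rintro ⟨a, b, c⟩; ext <;> simp <;> ring
  right_inv := by rintro ⟨a, b, c⟩; ext <;> simp <;> ring

/-- The braid group: the group of bijections of `ℂ³` generated by `β₁` and `β₂`. -/
def braidSubgroup : Subgroup (Equiv.Perm (ℂ × ℂ × ℂ)) :=
  Subgroup.closure {braidEquiv₁, braidEquiv₂}

/-- A triple is admissible if at most one of its coordinates equals zero. -/
def Admissible (p : ℂ × ℂ × ℂ) : Prop :=
  ¬(p.1 = 0 ∧ p.2.1 = 0) ∧ ¬(p.1 = 0 ∧ p.2.2 = 0) ∧ ¬(p.2.1 = 0 ∧ p.2.2 = 0)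

/-!
`β₁²` fixes `x₁` and acts on `(x₂, x₃)` by a matrix of determinant `1` and trace `2 - x₁²`.
A finite orbit forces some power of this matrix to fix the nonzero vector `(x₂, x₃)`, so one of
its eigenvalues `λ` is a root of unity. Writing `λ = -μ²` gives `x₁ = -(μ + μ⁻¹)` with `μ` a root
of unity, i.e. `x₁ = -2 cos (π r)`. The other coordinates are the first coordinates of `β₂ β₁ x`
and `β₂ x`, which have the same orbit as `x`.
-/

open Real Matrix

namespace Equiv.Perm

variable {α : Type*} {H : Subgroup (Equiv.Perm α)} {g : Equiv.Perm α} {x : α}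

theorem setOf_exists_mem_apply_apply_eq (hg : g ∈ H) :
    {p | ∃ h ∈ H, h (g x) = p} = {p | ∃ h ∈ H, h x = p} := by
  ext p
  constructor
  · rintro ⟨h, hh, rfl⟩
    exact ⟨h * g, H.mul_mem hh hg, rfl⟩
  · rintro ⟨h, hh, rfl⟩
    exact ⟨h * g⁻¹, H.mul_mem hh (H.inv_mem hg), by simp⟩

theorem exists_pow_apply_eq_self_of_finite (hfin : {p | ∃ h ∈ H, h x = p}.Finite)
    (hg : g ∈ H) : ∃ k, 0 < k ∧ (g ^ k) x = x := by
  have hmem (n : ℕ) : (g ^ n) x ∈ {p | ∃ h ∈ H, h x = p} := ⟨g ^ n, H.pow_mem hg n, rfl⟩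
  obtain ⟨m, n, hmn, heq⟩ := hfin.exists_lt_map_eq_of_forall_mem hmem
  obtain ⟨d, rfl⟩ := Nat.exists_eq_add_of_lt hmn
  refine ⟨d + 1, d.succ_pos, (g ^ m).injective ?_⟩
  simpa [← Equiv.Perm.mul_apply, ← pow_add, add_assoc] using heq.symm

end Equiv.Perm

theorem Real.exists_rat_cos_pi_mul_eq_of_le_two {q : ℚ} (h0 : 0 ≤ q) (h2 : q ≤ 2) :
    ∃ r : ℚ, 0 ≤ r ∧ r ≤ 1 ∧ cos (π * r) = cos (π * q) := by
  by_cases hq : q ≤ 1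
  · exact ⟨q, h0, hq, rfl⟩
  · refine ⟨2 - q, by linarith, by linarith, ?_⟩
    rw [show π * ((2 - q : ℚ) : ℝ) = 2 * π - π * q by push_cast; ring, cos_two_pi_sub]

theorem Complex.exists_rat_add_inv_eq_two_cos {μ : ℂ} {n : ℕ} (hn : 0 < n) (hμ : μ ^ n = 1) :
    ∃ r : ℚ, 0 ≤ r ∧ r ≤ 1 ∧ μ + μ⁻¹ = ((2 * Real.cos (π * r) : ℝ) : ℂ) := by
  have := NeZero.of_pos hn
  obtain ⟨i, hi, rfl⟩ := (isPrimitiveRoot_exp n hn.ne').eq_pow_of_pow_eq_one hμ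
  have hq2 : (2 * i / n : ℚ) ≤ 2 := by
    rw [div_le_iff₀ (by exact_mod_cast hn)]
    exact mul_le_mul_of_nonneg_left (by exact_mod_cast hi.le) zero_le_two
  obtain ⟨r, hr0, hr1, hr⟩ := Real.exists_rat_cos_pi_mul_eq_of_le_two (by positivity) hq2
  refine ⟨r, hr0, hr1, ?_⟩
  have harg : (i : ℂ) * (2 * π * I / n) = ((π * (2 * i / n : ℚ) : ℝ) : ℂ) * I := by
    push_cast
    ring
  rw [hr, ← exp_nat_mul, harg, ← exp_neg, ← neg_mul, ← two_cos]
  push_cast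
  rfl

theorem Complex.im_eq_zero_and_norm_le_two_of_eq_neg_two_cos {z : ℂ} {θ : ℝ}
    (hz : z = ((-2 * Real.cos θ : ℝ) : ℂ)) : z.im = 0 ∧ ‖z‖ ≤ 2 := by
  subst hz
  refine ⟨ofReal_im _, ?_⟩
  rw [norm_real, norm_mul, norm_neg, Real.norm_ofNat, Real.norm_eq_abs]
  nlinarith [abs_cos_le_one θ]

theorem IsAlgClosed.exists_pow_eq_one_and_eq_neg_add_inv {K : Type*} [Field K] [IsAlgClosed K]
    {a l : K} {k : ℕ} (hk : 0 < k) (hl : l ^ k = 1) (htr : l + l⁻¹ = 2 - a ^ 2) :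
    ∃ μ : K, μ ^ (4 * k) = 1 ∧ a = -(μ + μ⁻¹) := by
  obtain ⟨μ, hμ⟩ := exists_eq_mul_self (-l)
  rw [neg_eq_iff_eq_neg] at hμ
  subst hμ
  have hμ0 : μ ≠ 0 := by rintro rfl; simp [hk.ne'] at hl
  have hμk : μ ^ (4 * k) = 1 :=
    calc μ ^ (4 * k) = (μ * μ) ^ (2 * k) := by ring
      _ = (-(μ * μ)) ^ (2 * k) := (Even.neg_pow (even_two_mul k) _).symm
      _ = 1 := by rw [pow_mul', hl, one_pow]
  have hsq : a ^ 2 = (μ + μ⁻¹) ^ 2 := by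
    field_simp at htr ⊢
    linear_combination htr
  rcases sq_eq_sq_iff_eq_or_eq_neg.mp hsq with ha | ha
  · refine ⟨-μ, by rwa [Even.neg_pow ⟨2 * k, by ring⟩], ?_⟩
    rw [ha, inv_neg]
    ring
  · exact ⟨μ, hμk, ha⟩

theorem Matrix.exists_pow_eq_one_add_inv_eq_trace {K : Type*} [Field K] [IsAlgClosed K]
    {M : Matrix (Fin 2) (Fin 2) K} (hdet : M.det = 1) {k : ℕ} (hk : 0 < k) {v : Fin 2 → K}
    (hv : v ≠ 0) (hfix : (M ^ k) *ᵥ v = v) :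
    ∃ l : K, l ^ k = 1 ∧ l + l⁻¹ = M.trace := by
  have hone : (1 : K) ∈ spectrum K (M ^ k) := by
    rw [spectrum.mem_iff, Algebra.algebraMap_eq_smul_one, one_smul, isUnit_iff_isUnit_det,
      isUnit_iff_ne_zero, not_not, ← exists_mulVec_eq_zero_iff]
    exact ⟨v, hv, by rw [sub_mulVec, one_mulVec, hfix, sub_self]⟩
  rw [spectrum.map_pow_of_pos M hk] at hone
  obtain ⟨l, hl, hlk⟩ := hone
  rw [mem_spectrum_iff_isRoot_charpoly, charpoly_fin_two, hdet] at hl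
  have hl0 : l ≠ 0 := by rintro rfl; simp [hk.ne'] at hlk
  refine ⟨l, hlk, ?_⟩
  field_simp
  simp only [Polynomial.IsRoot, Polynomial.eval_add, Polynomial.eval_sub, Polynomial.eval_pow,
    Polynomial.eval_mul, Polynomial.eval_X, Polynomial.eval_C] at hl
  linear_combination hl

theorem exists_rat_eq_neg_two_cos_of_pow_mulVec_eq_self {a : ℂ}
    {M : Matrix (Fin 2) (Fin 2) ℂ} (hdet : M.det = 1) (htr : M.trace = 2 - a ^ 2) {k : ℕ}
    (hk : 0 < k) {v : Fin 2 → ℂ} (hv : v ≠ 0) (hfix : (M ^ k) *ᵥ v = v) :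
    ∃ r : ℚ, 0 ≤ r ∧ r ≤ 1 ∧ a = ((-2 * Real.cos (π * r) : ℝ) : ℂ) := by
  obtain ⟨l, hlk, hl⟩ := exists_pow_eq_one_add_inv_eq_trace hdet hk hv hfix
  obtain ⟨μ, hμ, rfl⟩ := IsAlgClosed.exists_pow_eq_one_and_eq_neg_add_inv hk hlk (hl.trans htr)
  obtain ⟨r, hr0, hr1, hr⟩ := Complex.exists_rat_add_inv_eq_two_cos (by positivity) hμ
  exact ⟨r, hr0, hr1, by rw [hr]; push_cast; ring⟩

theorem braidEquiv₁_apply (p : ℂ × ℂ × ℂ) :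
    braidEquiv₁ p = (-p.1, p.2.2 - p.1 * p.2.1, p.2.1) := rfl

theorem braidEquiv₂_apply (p : ℂ × ℂ × ℂ) :
    braidEquiv₂ p = (p.2.2, -p.2.1, p.1 - p.2.1 * p.2.2) := rfl

theorem braidEquiv₁_mem_braidSubgroup : braidEquiv₁ ∈ braidSubgroup :=
  Subgroup.subset_closure (Set.mem_insert _ _)

theorem braidEquiv₂_mem_braidSubgroup : braidEquiv₂ ∈ braidSubgroup :=
  Subgroup.subset_closure (Set.mem_insert_of_mem _ rfl)

def tailVec (p : ℂ × ℂ × ℂ) : Fin 2 → ℂ := ![p.2.1, p.2.2]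

def braidSqMatrix (a : ℂ) : Matrix (Fin 2) (Fin 2) ℂ := !![1 - a ^ 2, a; -a, 1]

theorem det_braidSqMatrix (a : ℂ) : (braidSqMatrix a).det = 1 := by
  rw [braidSqMatrix, det_fin_two_of]
  ring

theorem trace_braidSqMatrix (a : ℂ) : (braidSqMatrix a).trace = 2 - a ^ 2 := by
  rw [braidSqMatrix, trace_fin_two_of]
  ring

theorem tailVec_eq_zero_iff {p : ℂ × ℂ × ℂ} : tailVec p = 0 ↔ p.2.1 = 0 ∧ p.2.2 = 0 := by
  simp [tailVec, funext_iff, Fin.forall_fin_two]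

theorem braidEquiv₁_sq_apply (p : ℂ × ℂ × ℂ) :
    (braidEquiv₁ ^ 2) p = (p.1, (1 - p.1 ^ 2) * p.2.1 + p.1 * p.2.2, -p.1 * p.2.1 + p.2.2) := by
  simp only [sq, Equiv.Perm.mul_apply, braidEquiv₁_apply, neg_neg, Prod.mk.injEq, true_and]
  constructor <;> ring

theorem braidEquiv₁_sq_apply_fst (p : ℂ × ℂ × ℂ) : ((braidEquiv₁ ^ 2) p).1 = p.1 := by
  rw [braidEquiv₁_sq_apply]

theorem tailVec_braidEquiv₁_sq_apply (p : ℂ × ℂ × ℂ) :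
    tailVec ((braidEquiv₁ ^ 2) p) = braidSqMatrix p.1 *ᵥ tailVec p := by
  rw [braidEquiv₁_sq_apply, tailVec, tailVec, braidSqMatrix, cons_mulVec, cons_mulVec,
    empty_mulVec, vec2_dotProduct', vec2_dotProduct', one_mul]

theorem tailVec_braidEquiv₁_sq_pow_apply (k : ℕ) (p : ℂ × ℂ × ℂ) :
    tailVec (((braidEquiv₁ ^ 2) ^ k) p) = braidSqMatrix p.1 ^ k *ᵥ tailVec p := by
  induction k generalizing p with
  | zero => simp
  | succ k ih =>
    rw [pow_succ, Equiv.Perm.mul_apply, ih, braidEquiv₁_sq_apply_fst, tailVec_braidEquiv₁_sq_apply,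
      mulVec_mulVec, pow_succ]

theorem tailVec_braidEquiv₂_braidEquiv₁_ne_zero {x : ℂ × ℂ × ℂ} (hx : ¬(x.1 = 0 ∧ x.2.2 = 0)) :
    tailVec (braidEquiv₂ (braidEquiv₁ x)) ≠ 0 := by
  rw [Ne, tailVec_eq_zero_iff, braidEquiv₁_apply, braidEquiv₂_apply]
  rintro ⟨h, h'⟩
  rw [neg_eq_zero] at h
  rw [h, zero_mul, sub_zero, neg_eq_zero] at h'
  exact hx ⟨h', by rwa [h', zero_mul, sub_zero] at h⟩

theorem tailVec_braidEquiv₂_ne_zero {x : ℂ × ℂ × ℂ} (hx : ¬(x.1 = 0 ∧ x.2.1 = 0)) :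
    tailVec (braidEquiv₂ x) ≠ 0 := by
  rw [Ne, tailVec_eq_zero_iff, braidEquiv₂_apply]
  rintro ⟨h, h'⟩
  rw [neg_eq_zero] at h
  rw [h, zero_mul, sub_zero] at h'
  exact hx ⟨h', h⟩

theorem exists_rat_fst_eq_neg_two_cos_of_finite {y : ℂ × ℂ × ℂ} (hy : tailVec y ≠ 0)
    (hfin : {p | ∃ g ∈ braidSubgroup, g y = p}.Finite) :
    ∃ r : ℚ, 0 ≤ r ∧ r ≤ 1 ∧ y.1 = ((-2 * Real.cos (π * r) : ℝ) : ℂ) := by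
  obtain ⟨k, hk, hfix⟩ := Equiv.Perm.exists_pow_apply_eq_self_of_finite hfin
    (braidSubgroup.pow_mem braidEquiv₁_mem_braidSubgroup 2)
  refine exists_rat_eq_neg_two_cos_of_pow_mulVec_eq_self (det_braidSqMatrix y.1)
    (trace_braidSqMatrix y.1) hk hy ?_
  rw [← tailVec_braidEquiv₁_sq_pow_apply, hfix]

/-- If an admissible triple has a finite orbit under the braid group,
then each coordinate has the form `-2 cos(π r)` with `r ∈ [0,1]` rational; in particular
each coordinate is real with absolute value at most `2`. -/
theorem finite_orbit_coords_are_cosines (x : ℂ × ℂ × ℂ) (hadm : Admissible x)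
    (hfin : Set.Finite {p : ℂ × ℂ × ℂ | ∃ g ∈ braidSubgroup, g x = p}) :
    (∃ r₁ : ℚ, 0 ≤ r₁ ∧ r₁ ≤ 1 ∧ x.1 = ((-2 * Real.cos (Real.pi * r₁) : ℝ) : ℂ)) ∧
    (∃ r₂ : ℚ, 0 ≤ r₂ ∧ r₂ ≤ 1 ∧ x.2.1 = ((-2 * Real.cos (Real.pi * r₂) : ℝ) : ℂ)) ∧
    (∃ r₃ : ℚ, 0 ≤ r₃ ∧ r₃ ≤ 1 ∧ x.2.2 = ((-2 * Real.cos (Real.pi * r₃) : ℝ) : ℂ)) ∧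
    (x.1.im = 0 ∧ x.2.1.im = 0 ∧ x.2.2.im = 0) ∧
    (‖x.1‖ ≤ 2 ∧ ‖x.2.1‖ ≤ 2 ∧ ‖x.2.2‖ ≤ 2) := by
  obtain ⟨h₁₂, h₁₃, h₂₃⟩ := hadm
  have hβ₁ := braidEquiv₁_mem_braidSubgroup
  have hβ₂ := braidEquiv₂_mem_braidSubgroup
  have hcos₁ := exists_rat_fst_eq_neg_two_cos_of_finite (mt tailVec_eq_zero_iff.mp h₂₃) hfin
  have hcos₂ := exists_rat_fst_eq_neg_two_cos_of_finite
    (tailVec_braidEquiv₂_braidEquiv₁_ne_zero h₁₃)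
    (by rwa [Equiv.Perm.setOf_exists_mem_apply_apply_eq hβ₂,
      Equiv.Perm.setOf_exists_mem_apply_apply_eq hβ₁])
  have hcos₃ := exists_rat_fst_eq_neg_two_cos_of_finite (tailVec_braidEquiv₂_ne_zero h₁₂)
    (by rwa [Equiv.Perm.setOf_exists_mem_apply_apply_eq hβ₂])
  have hreal (z : ℂ) : (∃ r : ℚ, 0 ≤ r ∧ r ≤ 1 ∧ z = ((-2 * Real.cos (π * r) : ℝ) : ℂ)) →
      z.im = 0 ∧ ‖z‖ ≤ 2 :=
    fun ⟨_, _, _, hz⟩ => Complex.im_eq_zero_and_norm_le_two_of_eq_neg_two_cos hz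
  obtain ⟨him₁, hnorm₁⟩ := hreal _ hcos₁
  obtain ⟨him₂, hnorm₂⟩ := hreal _ hcos₂
  obtain ⟨him₃, hnorm₃⟩ := hreal _ hcos₃
  exact ⟨hcos₁, hcos₂, hcos₃, ⟨him₁, him₂, him₃⟩, ⟨hnorm₁, hnorm₂, hnorm₃⟩⟩
end

section
/- Let x, y, z be nonzero real numbers with |x| ≤ 2, |y| ≤ 2, |z| ≤ 2, satisfying x² + y² + z² − xyz = 4 + c² for some c > 0, and suppose |z| ≤ |x| and |z| ≤ |y|. Set (x',y',z') = (−x, z − xy, y) (the image of (x,y,z) under β₁). Then min(|x'|,|y'|,|z'|) ≥ min(|x|,|y|,|z|) and |x'| + |y'| + |z'| ≥ |x| + |y| + |z| + min(z², 2c). -/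
private lemma aux_sq (a b t c : ℝ)
    (heq' : a * b * t = a ^ 2 + b ^ 2 + t ^ 2 - 4 - c ^ 2)
    (h7 : (2 * (a + b)) ^ 2 ≤ (4 + a * b) ^ 2) :
    4 * c ^ 2 ≤ (a * b - 2 * t) ^ 2 := by nlinarith

private lemma aux_step1 (a b t c : ℝ) (ha : 0 < a) (hb : 0 < b) (ht : 0 < t)
    (hat : t ≤ a) (hbt : t ≤ b) (hax : a ≤ 2) (hbx : b ≤ 2) (hc : 0 < c)
    (heq' : a * b * t = a ^ 2 + b ^ 2 + t ^ 2 - 4 - c ^ 2) :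
    2 * t < a * b := by
  by_contra hcon
  push_neg at hcon
  have h1 : (a + b) * t ≤ a * b + t ^ 2 := by
    nlinarith [mul_nonneg (sub_nonneg.mpr hat) (sub_nonneg.mpr hbt)]
  have h2 : ((a + b) * t) ^ 2 ≤ (a * b + t ^ 2) ^ 2 :=
    pow_le_pow_left₀ (by positivity) h1 2
  have h3 : c ^ 2 * t ^ 2 ≤ (a * b - 2 * t) * (a * b + 2 * t - t ^ 3) := by
    nlinarith [h2, heq']
  have h4 : 0 ≤ a * b + 2 * t - t ^ 3 := by
    nlinarith [mul_nonneg (mul_nonneg ht.le (by linarith : (0:ℝ) ≤ 1 + t))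
      (by linarith : (0:ℝ) ≤ 2 - t)]
  nlinarith [mul_pos (mul_pos hc hc) (mul_pos ht ht),
    mul_nonneg (sub_nonneg.mpr hcon) h4]

private lemma aux_same (a b t c : ℝ) (ha : 0 < a) (hb : 0 < b) (ht : 0 < t)
    (hat : t ≤ a) (hbt : t ≤ b) (hax : a ≤ 2) (hbx : b ≤ 2) (hc : 0 < c)
    (heq' : a * b * t = a ^ 2 + b ^ 2 + t ^ 2 - 4 - c ^ 2) :
    2 * t + 2 * c ≤ a * b := by
  have hp2t := aux_step1 a b t c ha hb ht hat hbt hax hbx hc heq'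
  have h5 : 2 * (a + b) ≤ 4 + a * b := by
    nlinarith [mul_nonneg (by linarith : (0:ℝ) ≤ 2 - a) (by linarith : (0:ℝ) ≤ 2 - b)]
  have h7 : (2 * (a + b)) ^ 2 ≤ (4 + a * b) ^ 2 :=
    pow_le_pow_left₀ (by positivity) h5 2
  have hsq := aux_sq a b t c heq' h7
  nlinarith

set_option maxHeartbeats 1000000 in
/-- For nonzero reals `x, y, z` with `|x|,|y|,|z| ≤ 2`,
`x² + y² + z² - xyz = 4 + c²` with `c > 0`, and `|z| ≤ |x|, |y|`, the image
`(x',y',z') = (-x, z - xy, y)` under `β₁` satisfies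
`min(|x'|,|y'|,|z'|) ≥ min(|x|,|y|,|z|)` and
`|x'| + |y'| + |z'| ≥ |x| + |y| + |z| + min(z², 2c)`. -/
theorem braid_step_increases_sum (x y z c : ℝ)
    (hx : x ≠ 0) (hy : y ≠ 0) (hz : z ≠ 0)
    (hbx : |x| ≤ 2) (hby : |y| ≤ 2) (hbz : |z| ≤ 2)
    (hc : 0 < c) (heq : x ^ 2 + y ^ 2 + z ^ 2 - x * y * z = 4 + c ^ 2)
    (hzx : |z| ≤ |x|) (hzy : |z| ≤ |y|) :
    min |(-x)| (min |z - x * y| |y|) ≥ min |x| (min |y| |z|) ∧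
    |(-x)| + |z - x * y| + |y| ≥ |x| + |y| + |z| + min (z ^ 2) (2 * c) := by
  have ht : 0 < |z| := abs_pos.mpr hz
  have ha : 0 < |x| := abs_pos.mpr hx
  have hb : 0 < |y| := abs_pos.mpr hy
  have hsx : |x| ^ 2 = x ^ 2 := sq_abs x
  have hsy : |y| ^ 2 = y ^ 2 := sq_abs y
  have hsz : |z| ^ 2 = z ^ 2 := sq_abs z
  have hmin_le : min (z ^ 2) (2 * c) ≤ z ^ 2 := min_le_left _ _
  have hmin_le' : min (z ^ 2) (2 * c) ≤ 2 * c := min_le_right _ _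
  have key : |z - x * y| ≥ |z| + min (z ^ 2) (2 * c) := by
    rcases le_or_gt (x * y * z) 0 with h | h
    · -- opposite signs: |z - xy| = |z| + |xy|
      have h2 : |z| * (|x| * |y|) = -(x * y * z) := by
        rw [← abs_mul, ← abs_mul, abs_of_nonpos]
        · ring_nf
        · nlinarith
      have h1 : |z - x * y| ≥ |z| + |x| * |y| := by
        nlinarith [abs_nonneg (z - x * y), sq_abs (z - x * y), abs_nonneg z,
          mul_nonneg (abs_nonneg x) (abs_nonneg y),
          sq_nonneg (|z - x * y| - |z| - |x| * |y|)]
      have h3 : z ^ 2 ≤ |x| * |y| := by nlinarith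
      nlinarith
    · -- same sign case
      have habs : |x| * |y| * |z| = x * y * z := by
        rw [← abs_mul, ← abs_mul]; exact abs_of_pos h
      have heq' : |x| * |y| * |z| = |x| ^ 2 + |y| ^ 2 + |z| ^ 2 - 4 - c ^ 2 := by
        rw [hsx, hsy, hsz, habs]; linarith
      have h2c := aux_same |x| |y| |z| c ha hb ht hzx hzy hbx hby hc heq'
      have h4 : |x * y| - |z| ≤ |z - x * y| := by
        rw [abs_sub_comm]; exact abs_sub_abs_le_abs_sub (x * y) z
      rw [abs_mul] at h4
      nlinarith
  have hminz : min |x| (min |y| |z|) = |z| := by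
    rw [min_eq_right hzy, min_eq_right hzx]
  have hmnn : 0 ≤ min (z ^ 2) (2 * c) := le_min (sq_nonneg z) (by linarith)
  constructor
  · rw [hminz, abs_neg]
    exact le_min hzx (le_min (by linarith) hzy)
  · rw [abs_neg]; linarith
end
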